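/- arXiv:2401.13811 — 3 statements merged into one kernel-verified Lean document; each statement's English description precedes it below -/
import Mathlib

section
/- Define ζ(n,k,j) = Σ_{m=0}^{n-1-k-j} j^m · C(k+m,k) · S(n-1-k-m, j) for n ≥ 1, 0 ≤ k ≤ n-1, 2 ≤ j ≤ n-k-1 (with ζ(n,k,n-k)=0). Then for 1 ≤ k and 2 ≤ j ≤ n-k, the recursion ζ(n+1,k,j) = j·ζ(n,k,j) + ζ(n,k-1,j) holds. -/
open Finset

/-- Stirling numbers of the second kind. -/
def S2 : ℕ → ℕ → ℕ
  | 0, 0 => 1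
  | 0, _ + 1 => 0
  | _ + 1, 0 => 0
  | n + 1, k + 1 => S2 n k + (k + 1) * S2 n (k + 1)

/-- Signed Stirling numbers of the first kind. -/
def s1 : ℕ → ℕ → ℤ
  | 0, 0 => 1
  | 0, _ + 1 => 0
  | n + 1, 0 => -(n : ℤ) * s1 n 0
  | n + 1, k + 1 => s1 n k - (n : ℤ) * s1 n (k + 1)

/-- The triple-indexed array ζ(n,k,j) of the paper. -/
def zeta (n k j : ℕ) : ℕ :=
  if j = 0 then (if n = k + 1 then 1 else 0)
  else if j = 1 then Nat.choose (n - 1) (k + 1)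
  else ∑ m ∈ Finset.range (n - k - j), j ^ m * Nat.choose (k + m) k * S2 (n - 1 - k - m) j

/-- The triple-indexed array ε(n,k,j) of the paper. -/
def eps (n k j : ℕ) : ℕ :=
  if 1 ≤ n ∧ k ≤ n ∧ j = n - k then 1
  else if j = 0 then 0
  else if j = 1 then Nat.choose (n - 1) k
  else ∑ m ∈ Finset.range (n - k - j + 1),
    j ^ m * Nat.choose (k + m) k * S2 (n - 1 - k - m) (j - 1)

theorem zeta_recursion (n k j : ℕ) (hk : 1 ≤ k) (hj : 2 ≤ j) (hjn : j ≤ n - k) :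
    zeta (n + 1) k j = j * zeta n k j + zeta n (k - 1) j := by
  obtain ⟨l, rfl⟩ : ∃ l, k = l + 1 := ⟨k - 1, by omega⟩
  obtain ⟨a, rfl⟩ : ∃ a, n = l + 1 + j + a := ⟨n - (l + 1) - j, by omega⟩
  have hj0 : j ≠ 0 := by omega
  have hj1 : j ≠ 1 := by omega
  simp only [zeta, if_neg hj0, if_neg hj1, Nat.add_sub_cancel]
  have e1 : l + 1 + j + a + 1 - (l + 1) - j = a + 1 := by omega
  have e2 : l + 1 + j + a - (l + 1) - j = a := by omega
  have e3 : l + 1 + j + a - l - j = a + 1 := by omega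
  rw [e1, e2, e3]
  have L : ∀ m ∈ Finset.range (a + 1),
      j ^ m * Nat.choose (l + 1 + m) (l + 1) * S2 (l + 1 + j + a - (l + 1) - m) j
      = j ^ m * Nat.choose (l + 1 + m) (l + 1) * S2 (j + a - m) j := by
    intro m hm
    congr 1
    congr 1
    omega
  rw [Finset.sum_congr rfl L]
  have M : ∀ m ∈ Finset.range a,
      j ^ m * Nat.choose (l + 1 + m) (l + 1) * S2 (l + 1 + j + a - 1 - (l + 1) - m) j
      = j ^ m * Nat.choose (l + 1 + m) (l + 1) * S2 (j + a - 1 - m) j := by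
    intro m hm; congr 2; omega
  rw [Finset.sum_congr rfl M]
  have R : ∀ m ∈ Finset.range (a + 1),
      j ^ m * Nat.choose (l + m) l * S2 (l + 1 + j + a - 1 - l - m) j
      = j ^ m * Nat.choose (l + m) l * S2 (j + a - m) j := by
    intro m hm
    congr 2
    omega
  rw [Finset.sum_congr rfl R]
  -- peel first term of both (a+1)-sums
  rw [Finset.sum_range_succ' (fun m => j ^ m * Nat.choose (l + 1 + m) (l + 1) * S2 (j + a - m) j) a]
  rw [Finset.sum_range_succ' (fun m => j ^ m * Nat.choose (l + m) l * S2 (j + a - m) j) a]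
  simp only [pow_zero, one_mul, Nat.add_zero, Nat.sub_zero, Nat.choose_self]
  have key : ∀ i ∈ Finset.range a,
      j ^ (i + 1) * Nat.choose (l + 1 + (i + 1)) (l + 1) * S2 (j + a - (i + 1)) j
      = j * (j ^ i * Nat.choose (l + 1 + i) (l + 1) * S2 (j + a - 1 - i) j)
        + j ^ (i + 1) * Nat.choose (l + (i + 1)) l * S2 (j + a - (i + 1)) j := by
    intro i hi
    have hc : Nat.choose (l + 1 + (i + 1)) (l + 1) =
        Nat.choose (l + 1 + i) (l + 1) + Nat.choose (l + (i + 1)) l := by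
      have h := Nat.choose_succ_succ (l + 1 + i) l
      have e : l + 1 + (i + 1) = (l + 1 + i) + 1 := by ring
      have e' : l + (i + 1) = l + 1 + i := by ring
      rw [e, e', h]
      simp only [Nat.succ_eq_add_one]
      omega
    have hs : j + a - (i + 1) = j + a - 1 - i := by omega
    rw [hc, hs]
    ring
  rw [Finset.sum_congr rfl key, Finset.sum_add_distrib, ← Finset.mul_sum]
  ring
end

section
/- Define ε(n,k,j) = Σ_{m=0}^{n-k-j} j^m · C(k+m,k) · S(n-1-k-m, j-1) for n ≥ 1, 0 ≤ k ≤ n-1, 2 ≤ j ≤ n-k-1, with ε(n,k,n-k)=1, ε(n,k,1)=C(n-1,k), ε(n,k,0)=0. Then for 1 ≤ k ≤ n and 0 ≤ j ≤ n+1-k, ε(n+1,k,j) = j·ε(n,k,j) + ε(n,k-1,j), with the convention ε(n,k,j)=0 if k ≥ n or j ≥ n-k+1. -/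
open Finset

lemma S2_zero_of_lt : ∀ n k : ℕ, n < k → S2 n k = 0 := by
  intro n
  induction n with
  | zero => intro k hk; obtain ⟨k', rfl⟩ := Nat.exists_eq_add_of_lt hk; simp [S2]
  | succ n ih =>
      intro k hk
      obtain ⟨k', rfl⟩ := Nat.exists_eq_succ_of_ne_zero (by omega : k ≠ 0)
      rw [S2, ih k' (by omega), ih (k' + 1) (by omega)]
      ring

lemma S2_self : ∀ n : ℕ, S2 n n = 1 := by
  intro n
  induction n with
  | zero => rfl
  | succ n ih => rw [S2, ih, S2_zero_of_lt n (n + 1) (by omega)]; ring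

lemma eps_sum (k j a : ℕ) (hj : 2 ≤ j) :
    eps (k + j + a) k j
      = ∑ m ∈ Finset.range (a + 1),
          j ^ m * Nat.choose (k + m) k * S2 (j - 1 + a - m) (j - 1) := by
  rcases Nat.eq_zero_or_pos a with rfl | ha
  · rw [eps, if_pos ⟨by omega, by omega, by omega⟩]
    rw [Finset.sum_range_one]
    simp [S2_self]
  · rw [eps, if_neg (by omega), if_neg (by omega), if_neg (by omega)]
    have h1 : k + j + a - k - j + 1 = a + 1 := by omega
    rw [h1]
    refine Finset.sum_congr rfl fun m hm => ?_
    have h2 : k + j + a - 1 - k - m = j - 1 + a - m := by omega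
    rw [h2]

lemma key_sum (k j a : ℕ) (hj : 2 ≤ j) :
    ∑ m ∈ Finset.range (a + 2),
        j ^ m * Nat.choose (k + 1 + m) (k + 1) * S2 (j + a - m) (j - 1)
      = j * ∑ m ∈ Finset.range (a + 1),
            j ^ m * Nat.choose (k + 1 + m) (k + 1) * S2 (j - 1 + a - m) (j - 1)
        + ∑ m ∈ Finset.range (a + 2),
            j ^ m * Nat.choose (k + m) k * S2 (j + a - m) (j - 1) := by
  rw [Finset.sum_range_succ' (fun m => j ^ m * Nat.choose (k + 1 + m) (k + 1) * S2 (j + a - m) (j - 1)) (a + 1),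
      Finset.sum_range_succ' (fun m => j ^ m * Nat.choose (k + m) k * S2 (j + a - m) (j - 1)) (a + 1)]
  simp only [pow_zero, one_mul, Nat.add_zero, Nat.sub_zero, Nat.choose_self,
    Nat.choose_zero_right]
  have hpascal : ∀ m : ℕ,
      j ^ (m + 1) * Nat.choose (k + 1 + (m + 1)) (k + 1) * S2 (j + a - (m + 1)) (j - 1)
        = j ^ (m + 1) * Nat.choose (k + (m + 1)) k * S2 (j + a - (m + 1)) (j - 1)
          + j * (j ^ m * Nat.choose (k + 1 + m) (k + 1) * S2 (j - 1 + a - m) (j - 1)) := by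
    intro m
    have h1 : k + 1 + (m + 1) = (k + m + 1) + 1 := by ring
    have h2 : Nat.choose ((k + m + 1) + 1) (k + 1)
        = Nat.choose (k + m + 1) k + Nat.choose (k + m + 1) (k + 1) :=
      Nat.choose_succ_succ (k + m + 1) k
    have h3 : k + (m + 1) = k + m + 1 := by ring
    have h4 : k + 1 + m = k + m + 1 := by ring
    have h5 : j + a - (m + 1) = j - 1 + a - m := by omega
    rw [h1, h2, h3, h4, h5, pow_succ]
    ring
  rw [Finset.sum_congr rfl (fun m _ => hpascal m), Finset.sum_add_distrib,
      ← Finset.mul_sum]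
  ring

theorem eps_recursion (n k j : ℕ) (hn : 1 ≤ n) (hk : 1 ≤ k) (hkn : k ≤ n)
    (hj : j ≤ n + 1 - k) :
    eps (n + 1) k j = j * eps n k j + eps n (k - 1) j := by
  obtain ⟨k', rfl⟩ := Nat.exists_eq_succ_of_ne_zero (by omega : k ≠ 0)
  have hkn' : k' + 1 ≤ n := hkn
  simp only [Nat.succ_sub_one]
  rcases Nat.lt_or_ge j 2 with hj2 | hj2
  · interval_cases j
    · -- j = 0
      have hL : eps (n + 1) (k' + 1) 0 = 0 := by
        rw [eps, if_neg (by omega), if_pos rfl]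
      have hR : eps n k' 0 = 0 := by
        rw [eps, if_neg (by omega), if_pos rfl]
      rw [hL, hR, zero_mul]
    · -- j = 1
      rcases Nat.lt_or_ge (k' + 1) n with hlt | hge
      · -- k < n
        have hL : eps (n + 1) (k' + 1) 1 = Nat.choose n (k' + 1) := by
          rw [eps, if_neg (by omega), if_neg (by omega), if_pos rfl]
          simp
        have hR2 : eps n k' 1 = Nat.choose (n - 1) k' := by
          rw [eps, if_neg (by omega), if_neg (by omega), if_pos rfl]
        have hR1 : eps n (k' + 1) 1 = Nat.choose (n - 1) (k' + 1) := by
          rcases Nat.eq_or_lt_of_le (by omega : k' + 1 ≤ n - 1) with heq | hlt2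
          · rw [eps, if_pos ⟨by omega, by omega, by omega⟩, ← heq, Nat.choose_self]
          · rw [eps, if_neg (by omega), if_neg (by omega), if_pos rfl]
        rw [hL, hR1, hR2, one_mul]
        obtain ⟨n', rfl⟩ := Nat.exists_eq_succ_of_ne_zero (by omega : n ≠ 0)
        simp only [Nat.succ_sub_one]
        rw [Nat.choose_succ_succ n' k']
        ring
      · -- k = n
        have hkeq : n = k' + 1 := by omega
        subst hkeq
        have hL : eps (k' + 1 + 1) (k' + 1) 1 = 1 := by
          rw [eps, if_pos ⟨by omega, by omega, by omega⟩]
        have hR1 : eps (k' + 1) (k' + 1) 1 = 0 := by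
          rw [eps, if_neg (by omega), if_neg (by omega), if_pos rfl]
          exact Nat.choose_eq_zero_of_lt (by omega)
        have hR2 : eps (k' + 1) k' 1 = 1 := by
          rw [eps, if_pos ⟨by omega, by omega, by omega⟩]
        rw [hL, hR1, hR2]
  · -- j ≥ 2
    rcases Nat.lt_or_ge (n - (k' + 1)) j with hbig | hle
    · -- j = n + 1 - k
      have hL : eps (n + 1) (k' + 1) j = 1 := by
        rw [eps, if_pos ⟨by omega, by omega, by omega⟩]
      have hR2 : eps n k' j = 1 := by
        rw [eps, if_pos ⟨by omega, by omega, by omega⟩]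
      have hR1 : eps n (k' + 1) j = 0 := by
        rw [eps, if_neg (by omega), if_neg (by omega), if_neg (by omega)]
        have h1 : n - (k' + 1) - j + 1 = 1 := by omega
        rw [h1, Finset.sum_range_one]
        rw [S2_zero_of_lt (n - 1 - (k' + 1) - 0) (j - 1) (by omega)]
        ring
      rw [hL, hR1, hR2]
      ring
    · -- 2 ≤ j ≤ n - k : main case
      obtain ⟨a, rfl⟩ : ∃ a, n = k' + 1 + j + a := ⟨n - (k' + 1) - j, by omega⟩
      have e1 : eps (k' + 1 + j + a + 1) (k' + 1) j
          = ∑ m ∈ Finset.range (a + 2),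
              j ^ m * Nat.choose (k' + 1 + m) (k' + 1) * S2 (j - 1 + (a + 1) - m) (j - 1) := by
        have h : k' + 1 + j + a + 1 = (k' + 1) + j + (a + 1) := by ring
        rw [h]
        exact eps_sum (k' + 1) j (a + 1) hj2
      have e2 : eps (k' + 1 + j + a) (k' + 1) j
          = ∑ m ∈ Finset.range (a + 1),
              j ^ m * Nat.choose (k' + 1 + m) (k' + 1) * S2 (j - 1 + a - m) (j - 1) :=
        eps_sum (k' + 1) j a hj2
      have e3 : eps (k' + 1 + j + a) k' j
          = ∑ m ∈ Finset.range (a + 2),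
              j ^ m * Nat.choose (k' + m) k' * S2 (j - 1 + (a + 1) - m) (j - 1) := by
        have h : k' + 1 + j + a = k' + j + (a + 1) := by ring
        rw [h]
        exact eps_sum k' j (a + 1) hj2
      rw [e1, e2, e3]
      have h1 : ∀ m : ℕ, j - 1 + (a + 1) - m = j + a - m := by omega
      simp only [h1]
      exact key_sum k' j a hj2
end

section
/- Let f be a holomorphic function on ℂ satisfying f'(z) = λe^{cz} f(z) + (1 − λe^{cz})α(z), where λ, c are nonzero complex constants and α is meromorphic such that (1−λe^{cz})α is entire. Then for every n ≥ 1, f^{(n)} = A_n f + B_n, where A_n = Σ_{k=1}^{n} S(n,k) λ^k c^{n-k} e^{kcz}, and A_n, B_n satisfy the recursion A_{n+1} = A_n' + A_n·λe^{cz}, B_{n+1} = A_n(1−λe^{cz})α + B_n', with A_1 = λe^{cz}, B_1 = (1−λe^{cz})α. -/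
open Finset

open Complex

/-!
Differentiating `f^{(n)} = A_n f + B_n` once more and substituting the equation for `f'` gives
`f^{(n+1)} = (A_n' + A_n λe^{cz}) f + (A_n (1 - λe^{cz}) α + B_n')`, which is the recursion for
`A` and `B`. With `x = λe^{cz}` one has `x' = c x`, so `A_n` is a polynomial in `x` and the recursion
`A_{n+1} = A_n' + x A_n` becomes `P_{n+1}(x) = c x P_n'(x) + x P_n(x)`; this is the recurrence of
Stirling numbers of the second kind.
-/

theorem S2_eq_zero_of_lt : ∀ {n k : ℕ}, n < k → S2 n k = 0
  | 0, _ + 1, _ => rfl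
  | n + 1, k + 1, h => by
    rw [S2, S2_eq_zero_of_lt (by omega), S2_eq_zero_of_lt (by omega), mul_zero, add_zero]

/-- The homogenised Touchard polynomial `c^n T_n(x / c)`. -/
def touchardHom {R : Type*} [CommSemiring R] (n : ℕ) (c x : R) : R :=
  ∑ k ∈ range (n + 1), (S2 n k : R) * c ^ (n - k) * x ^ k

section touchardHom

variable {R : Type*} [CommSemiring R]

theorem touchardHom_one (c x : R) : touchardHom 1 c x = x := by
  simp [touchardHom, sum_range_succ, S2]

theorem touchardHom_succ (n : ℕ) (c x : R) :
    touchardHom (n + 1) c x =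
      ∑ k ∈ range (n + 1), (S2 n k : R) * c ^ (n - k) * (k * c * x ^ k) + touchardHom n c x * x := by
  have hshift : ∑ k ∈ range (n + 1), ((k + 1 : ℕ) * S2 n (k + 1) : R) * c ^ (n - k) * x ^ (k + 1) =
      ∑ k ∈ range (n + 1), (S2 n k : R) * c ^ (n - k) * (k * c * x ^ k) := by
    rw [sum_range_succ, S2_eq_zero_of_lt (Nat.lt_succ_self n), sum_range_succ']
    simp only [Nat.cast_zero, mul_zero, zero_mul, add_zero]
    refine sum_congr rfl fun k hk => ?_
    rw [show n - k = n - (k + 1) + 1 by grind, pow_succ]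
    push_cast
    ring
  rw [touchardHom, sum_range_succ', ← hshift, touchardHom, sum_mul, ← sum_add_distrib]
  simp only [S2, Nat.cast_zero, zero_mul, add_zero, Nat.add_sub_add_right, Nat.cast_add,
    Nat.cast_mul, pow_succ]
  exact sum_congr rfl fun k _ => by push_cast; ring

theorem touchardHom_eq_sum_Icc {n : ℕ} (hn : 1 ≤ n) (c x : R) :
    touchardHom n c x = ∑ k ∈ Icc 1 n, (S2 n k : R) * c ^ (n - k) * x ^ k := by
  obtain ⟨m, rfl⟩ := Nat.exists_eq_add_of_le' hn
  rw [touchardHom, range_eq_Ico, sum_eq_sum_Ico_succ_bot (Nat.succ_pos _), zero_add,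
    Nat.succ_eq_add_one, Ico_add_one_right_eq_Icc]
  simp [S2]

end touchardHom

theorem hasDerivAt_mul_exp_pow (a c z : ℂ) (k : ℕ) :
    HasDerivAt (fun z => (a * exp (c * z)) ^ k) (k * c * (a * exp (c * z)) ^ k) z := by
  have hpow : ∀ z, (a * exp (c * z)) ^ k = a ^ k * exp (k * c * z) := fun z => by
    rw [mul_pow, ← exp_nat_mul, mul_assoc]
  simp only [hpow]
  simpa [mul_comm, mul_left_comm, mul_assoc] using
    (((hasDerivAt_id z).const_mul ((k : ℂ) * c)).cexp).const_mul (a ^ k)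

theorem hasDerivAt_touchardHom_mul_exp (n : ℕ) (a c z : ℂ) :
    HasDerivAt (fun z => touchardHom n c (a * exp (c * z)))
      (∑ k ∈ range (n + 1), (S2 n k : ℂ) * c ^ (n - k) * (k * c * (a * exp (c * z)) ^ k)) z :=
  HasDerivAt.fun_sum fun k _ => (hasDerivAt_mul_exp_pow a c z k).const_mul _

theorem touchardHom_mul_exp_succ (n : ℕ) (a c z : ℂ) :
    touchardHom (n + 1) c (a * exp (c * z)) =
      deriv (fun z => touchardHom n c (a * exp (c * z))) z +
        touchardHom n c (a * exp (c * z)) * (a * exp (c * z)) := by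
  rw [(hasDerivAt_touchardHom_mul_exp n a c z).deriv, touchardHom_succ]

theorem iteratedDeriv_eq_mul_add_of_deriv_eq {f a b : ℂ → ℂ} {A B : ℕ → ℂ → ℂ}
    (hf : Differentiable ℂ f) (hode : ∀ z, deriv f z = a z * f z + b z)
    (hA : ∀ n, 1 ≤ n → Differentiable ℂ (A n))
    (hA1 : ∀ z, A 1 z = a z) (hB1 : ∀ z, B 1 z = b z)
    (hArec : ∀ n, 1 ≤ n → ∀ z, A (n + 1) z = deriv (A n) z + A n z * a z)
    (hBrec : ∀ n, 1 ≤ n → ∀ z, B (n + 1) z = A n z * b z + deriv (B n) z) :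
    ∀ n, 1 ≤ n → ∀ z, iteratedDeriv n f z = A n z * f z + B n z := by
  intro n hn
  induction n, hn using Nat.le_induction with
  | base => intro z; rw [iteratedDeriv_one, hode, hA1, hB1]
  | succ n hn ih =>
    intro z
    have hBn : B n = fun z => iteratedDeriv n f z - A n z * f z := by
      funext z; rw [ih]; ring
    have hBd : Differentiable ℂ (B n) := hBn ▸
      (hf.contDiff.differentiable_iteratedDeriv n (WithTop.coe_lt_top _)).sub ((hA n hn).mul hf)
    rw [iteratedDeriv_succ, funext ih, deriv_fun_add ((hA n hn z).fun_mul (hf z)) (hBd z),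
      deriv_fun_mul (hA n hn z) (hf z), hode, hArec n hn, hBrec n hn]
    ring

theorem iterated_deriv_formula_general (f α : ℂ → ℂ) (lam c : ℂ)
    (hf : Differentiable ℂ f)
    (hode : ∀ z, deriv f z = lam * Complex.exp (c * z) * f z +
      (1 - lam * Complex.exp (c * z)) * α z)
    (A B : ℕ → ℂ → ℂ)
    (hA1 : ∀ z, A 1 z = lam * Complex.exp (c * z))
    (hB1 : ∀ z, B 1 z = (1 - lam * Complex.exp (c * z)) * α z)
    (hArec : ∀ n, 1 ≤ n → ∀ z,
      A (n + 1) z = deriv (A n) z + A n z * (lam * Complex.exp (c * z)))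
    (hBrec : ∀ n, 1 ≤ n → ∀ z,
      B (n + 1) z = A n z * ((1 - lam * Complex.exp (c * z)) * α z) + deriv (B n) z) :
    ∀ n, 1 ≤ n →
      (∀ z, iteratedDeriv n f z = A n z * f z + B n z) ∧
      (∀ z, A n z = ∑ k ∈ Icc 1 n,
        (S2 n k : ℂ) * lam ^ k * c ^ (n - k) * Complex.exp ((k : ℂ) * c * z)) := by
  have hA : ∀ n, 1 ≤ n → A n = fun z => touchardHom n c (lam * exp (c * z)) := by
    intro n hn
    induction n, hn using Nat.le_induction with
    | base => funext z; rw [hA1, touchardHom_one]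
    | succ n hn ih => funext z; rw [hArec n hn, ih, touchardHom_mul_exp_succ]
  intro n hn
  refine ⟨iteratedDeriv_eq_mul_add_of_deriv_eq (a := fun z => lam * exp (c * z)) hf hode
    (fun n hn => hA n hn ▸ fun z => (hasDerivAt_touchardHom_mul_exp n lam c z).differentiableAt)
    hA1 hB1 hArec hBrec n hn, fun z => ?_⟩
  rw [congrFun (hA n hn) z, touchardHom_eq_sum_Icc hn]
  refine sum_congr rfl fun k _ => ?_
  rw [mul_pow, ← exp_nat_mul]
  ring_nf

theorem iterated_deriv_formula (f α : ℂ → ℂ) (lam c : ℂ) (hlam : lam ≠ 0) (hc : c ≠ 0)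
    (hf : Differentiable ℂ f)
    (hα : MeromorphicOn α Set.univ)
    (hg : Differentiable ℂ (fun z => (1 - lam * Complex.exp (c * z)) * α z))
    (hode : ∀ z, deriv f z = lam * Complex.exp (c * z) * f z +
      (1 - lam * Complex.exp (c * z)) * α z)
    (A B : ℕ → ℂ → ℂ)
    (hA1 : ∀ z, A 1 z = lam * Complex.exp (c * z))
    (hB1 : ∀ z, B 1 z = (1 - lam * Complex.exp (c * z)) * α z)
    (hArec : ∀ n, 1 ≤ n → ∀ z,
      A (n + 1) z = deriv (A n) z + A n z * (lam * Complex.exp (c * z)))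
    (hBrec : ∀ n, 1 ≤ n → ∀ z,
      B (n + 1) z = A n z * ((1 - lam * Complex.exp (c * z)) * α z) + deriv (B n) z) :
    ∀ n, 1 ≤ n →
      (∀ z, iteratedDeriv n f z = A n z * f z + B n z) ∧
      (∀ z, A n z = ∑ k ∈ Icc 1 n,
        (S2 n k : ℂ) * lam ^ k * c ^ (n - k) * Complex.exp ((k : ℂ) * c * z)) :=
  iterated_deriv_formula_general f α lam c hf hode A B hA1 hB1 hArec hBrec
end
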